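/- arXiv:1604.08542 — 2 statements merged into one kernel-verified Lean document; each statement's English description precedes it below -/
import Mathlib

section
/- Let (ξ(n)) be a sequence of reals with |ξ(n)| ≤ C₁(1+n)^{-a} for all n ≥ 1, and let (ψ₁(n)), (ψ₂(n)) be sequences whose truncated ℓ² norms satisfy ‖ψ₁‖_L · ‖ψ₂‖_L ≤ C₂(1+L)^b for all natural numbers L ≥ 1, where ‖ψ‖_L = (Σ_{n=1}^{L} |ψ(n)|²)^{1/2}. If a > b > 0, then the series Σ_{n=1}^{∞} |ξ(n) ψ₁(n) ψ₂(n)| converges. -/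
/-!
By Cauchy–Schwarz the partial sums `U N = ∑_{n ≤ N} |ψ₁ n ψ₂ n|` are at most `C₂ (1 + N)^b`.
Summation by parts against the decreasing weights `w n = (1 + n)^(-a)` bounds
`∑_{n ≤ N} w n |ψ₁ n ψ₂ n|` by `w N U N + ∑_{n < N} (w n - w (n + 1)) U n`; the mean value theorem
gives `w n - w (n + 1) ≤ a (1 + n)^(-a-1)`, so the second sum is dominated by the convergent series
`a C₂ ∑ n^(b-a-1)`, and the first term is at most `C₂`.
-/

/-- Truncated ℓ² norm: `(∑_{n=1}^{L} |ψ(n)|²)^{1/2}`. -/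
noncomputable def trnorm (ψ : ℕ → ℝ) (L : ℕ) : ℝ :=
  Real.sqrt (∑ n ∈ Finset.Icc 1 L, (ψ n) ^ 2)

open Finset Real

theorem sum_abs_mul_le_trnorm_mul (ψ₁ ψ₂ : ℕ → ℝ) (L : ℕ) :
    ∑ n ∈ Icc 1 L, |ψ₁ n * ψ₂ n| ≤ trnorm ψ₁ L * trnorm ψ₂ L := by
  simpa only [trnorm, abs_mul, sq_abs] using
    sum_mul_le_sqrt_mul_sqrt (Icc 1 L) (fun n => |ψ₁ n|) (fun n => |ψ₂ n|)

theorem rpow_neg_sub_rpow_neg_add_one_le {a x : ℝ} (ha : 0 ≤ a) (hx : 0 < x) :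
    x ^ (-a) - (x + 1) ^ (-a) ≤ a * x ^ (-a - 1) := by
  obtain ⟨c, ⟨hxc, -⟩, hslope⟩ := exists_hasDerivAt_eq_slope (fun t => t ^ (-a))
    (fun t => -a * t ^ (-a - 1)) (lt_add_one x)
    (fun t ht => (continuousAt_rpow_const t (-a)
      (Or.inl (hx.trans_le ht.1).ne')).continuousWithinAt)
    (fun t ht => hasDerivAt_rpow_const (Or.inl (hx.trans ht.1).ne'))
  have hcx : c ^ (-a - 1) ≤ x ^ (-a - 1) := rpow_le_rpow_of_nonpos hx hxc.le (by linarith)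
  rw [add_sub_cancel_left, div_one] at hslope
  nlinarith

theorem sum_range_mul_eq_mul_sum_add_sum_sub_mul (w u : ℕ → ℝ) (N : ℕ) :
    ∑ i ∈ range N, w i * u i = w N * ∑ i ∈ range N, u i
      + ∑ i ∈ range N, (w i - w (i + 1)) * ∑ j ∈ range (i + 1), u j := by
  induction N with
  | zero => simp
  | succ N ih =>
    simp only [sum_range_succ _ N, ih]
    ring

theorem summable_mul_of_abel_summation {w u g : ℕ → ℝ} (hu : ∀ i, 0 ≤ u i) (hw : ∀ i, 0 ≤ w i)
    (hw_anti : Antitone w) {B : ℝ} (hB : ∀ N, w N * ∑ i ∈ range N, u i ≤ B) (hg : Summable g)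
    (hle : ∀ i, (w i - w (i + 1)) * ∑ j ∈ range (i + 1), u j ≤ g i) :
    Summable fun i => w i * u i := by
  have hg_nonneg : ∀ i, 0 ≤ g i := fun i =>
    (mul_nonneg (sub_nonneg.2 (hw_anti i.le_succ)) (sum_nonneg fun j _ => hu j)).trans (hle i)
  refine summable_of_sum_range_le (c := B + ∑' i, g i)
    (fun i => mul_nonneg (hw i) (hu i)) fun N => ?_
  rw [sum_range_mul_eq_mul_sum_add_sum_sub_mul]
  exact add_le_add (hB N)
    ((sum_le_sum fun i _ => hle i).trans (hg.sum_le_tsum _ fun i _ => hg_nonneg i))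

theorem summable_rpow_neg_mul_of_sum_range_le {u : ℕ → ℝ} (hu : ∀ i, 0 ≤ u i) {a b C : ℝ}
    (ha : 0 ≤ a) (hab : b < a) (hU : ∀ N : ℕ, ∑ i ∈ range N, u i ≤ C * ((N : ℝ) + 1) ^ b) :
    Summable fun i : ℕ => ((i : ℝ) + 2) ^ (-a) * u i := by
  have hC : 0 ≤ C := by simpa using hU 0
  have hpos : ∀ i : ℕ, (0 : ℝ) < (i : ℝ) + 1 := fun i => by positivity
  refine summable_mul_of_abel_summation (w := fun i : ℕ => ((i : ℝ) + 2) ^ (-a)) (B := C)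
    (g := fun i : ℕ => a * C * ((i : ℝ) + 2) ^ (b - a - 1)) hu
    (fun i => by positivity) ?_ ?_ ?_ ?_
  · refine antitone_nat_of_succ_le fun i => rpow_le_rpow_of_nonpos (by positivity) ?_ (by linarith)
    push_cast; linarith
  · intro N
    calc ((N : ℝ) + 2) ^ (-a) * ∑ i ∈ range N, u i
        ≤ ((N : ℝ) + 1) ^ (-a) * (C * ((N : ℝ) + 1) ^ b) :=
          mul_le_mul (rpow_le_rpow_of_nonpos (hpos N) (by linarith) (by linarith)) (hU N)
            (sum_nonneg fun i _ => hu i) (by positivity)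
      _ = C * ((N : ℝ) + 1) ^ (b - a) := by
          rw [sub_eq_add_neg b a, rpow_add (hpos N)]; ring
      _ ≤ C := mul_le_of_le_one_right hC
          (rpow_le_one_of_one_le_of_nonpos (le_add_of_nonneg_left N.cast_nonneg) (by linarith))
  · exact (summable_nat_add_iff 2).2 (summable_nat_rpow.2 (by linarith : b - a - 1 < -1))
      |>.mul_left (a * C) |>.congr fun i => by push_cast; ring_nf
  · intro i
    have hi : (0 : ℝ) < (i : ℝ) + 2 := by positivity
    have hcast : ((i + 1 : ℕ) : ℝ) + 2 = (i : ℝ) + 2 + 1 := by push_cast; ring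
    have hUi : ∑ j ∈ range (i + 1), u j ≤ C * ((i : ℝ) + 2) ^ b := by
      simpa [add_assoc, one_add_one_eq_two] using hU (i + 1)
    calc (((i : ℝ) + 2) ^ (-a) - (((i + 1 : ℕ) : ℝ) + 2) ^ (-a)) * ∑ j ∈ range (i + 1), u j
        ≤ a * ((i : ℝ) + 2) ^ (-a - 1) * (C * ((i : ℝ) + 2) ^ b) := by
          rw [hcast]
          exact mul_le_mul (rpow_neg_sub_rpow_neg_add_one_le ha hi) hUi
            (sum_nonneg fun j _ => hu j) (by positivity)
      _ = a * C * ((i : ℝ) + 2) ^ (b - a - 1) := by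
          rw [show b - a - 1 = -a - 1 + b by ring, rpow_add hi]; ring

theorem stmt0_general (ξ ψ₁ ψ₂ : ℕ → ℝ) (C₁ C₂ a b : ℝ)
    (hC₂ : 0 < C₂) (hb : 0 < b) (hab : b < a)
    (hξ : ∀ n : ℕ, 1 ≤ n → |ξ n| ≤ C₁ * (1 + (n : ℝ)) ^ (-a))
    (hψ : ∀ L : ℕ, 1 ≤ L → trnorm ψ₁ L * trnorm ψ₂ L ≤ C₂ * (1 + (L : ℝ)) ^ b) :
    Summable (fun n : ℕ => |ξ (n + 1) * ψ₁ (n + 1) * ψ₂ (n + 1)|) := by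
  set u : ℕ → ℝ := fun n => |ψ₁ (n + 1) * ψ₂ (n + 1)|
  have hU : ∀ N : ℕ, ∑ n ∈ range N, u n ≤ C₂ * ((N : ℝ) + 1) ^ b := by
    rintro (_ | N)
    · simpa using hC₂.le
    · rw [range_eq_Ico, sum_Ico_add' (fun n => |ψ₁ n * ψ₂ n|), zero_add,
        Ico_add_one_right_eq_Icc, add_comm _ (1 : ℝ)]
      exact (sum_abs_mul_le_trnorm_mul ψ₁ ψ₂ (N + 1)).trans
        (by exact_mod_cast hψ (N + 1) le_add_self)
  have hsum := (summable_rpow_neg_mul_of_sum_range_le (fun n => abs_nonneg _)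
    (hb.le.trans hab.le) hab hU).mul_left C₁
  refine hsum.of_nonneg_of_le (fun n => abs_nonneg _) fun n => ?_
  have hξn : |ξ (n + 1)| ≤ C₁ * ((n : ℝ) + 2) ^ (-a) := by
    convert hξ (n + 1) le_add_self using 3
    push_cast; ring
  rw [mul_assoc, abs_mul, ← mul_assoc]
  exact mul_le_mul_of_nonneg_right hξn (abs_nonneg _)

theorem stmt0 (ξ ψ₁ ψ₂ : ℕ → ℝ) (C₁ C₂ a b : ℝ)
    (hC₁ : 0 < C₁) (hC₂ : 0 < C₂) (hb : 0 < b) (hab : b < a)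
    (hξ : ∀ n : ℕ, 1 ≤ n → |ξ n| ≤ C₁ * (1 + (n : ℝ)) ^ (-a))
    (hψ : ∀ L : ℕ, 1 ≤ L → trnorm ψ₁ L * trnorm ψ₂ L ≤ C₂ * (1 + (L : ℝ)) ^ b) :
    Summable (fun n : ℕ => |ξ (n + 1) * ψ₁ (n + 1) * ψ₂ (n + 1)|) :=
  stmt0_general ξ ψ₁ ψ₂ C₁ C₂ a b hC₂ hb hab hξ hψ
end

section
/- Let μ be a finite Borel measure on ℝ and α ∈ [0,1]. Define D^α_μ(E) = limsup_{ε→0⁺} μ((E−ε, E+ε))/(2ε)^α and T^α_∞ = {E : D^α_μ(E) = ∞}. Then μ decomposes uniquely as μ = μ_{αs} + μ_{αc}, where μ_{αs} = μ restricted to T^α_∞ and μ_{αc} = μ restricted to the complement; μ_{αc} satisfies D^α_{μ_{αc}}(E) < ∞ for μ_{αc}-almost every E. -/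
/-!
`T^α_∞` is Borel because `D^α_μ` is measurable: along the countable basis `(0, 1/(n+1))` of
`𝓝[>] 0` it is an infimum of suprema of the functions `E ↦ μ (ball E ε) / (2ε)^α`, each of which
is lower semicontinuous by continuity of `μ` from below. Given that, existence and uniqueness of
the decomposition are general facts about restrictions, and `D^α_{μ_{αc}} ≤ D^α_μ < ∞` holds off
`T^α_∞` because `D^α` is monotone in the measure.
-/

open MeasureTheory Filter

/-- Upper `α`-derivative `D^α_μ(E) = limsup_{ε→0⁺} μ((E−ε,E+ε))/(2ε)^α`. -/
noncomputable def upperDeriv (μ : Measure ℝ) (α : ℝ) (E : ℝ) : ENNReal :=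
  limsup (fun ε : ℝ => μ (Set.Ioo (E - ε) (E + ε)) / ENNReal.ofReal ((2 * ε) ^ α))
    (nhdsWithin 0 (Set.Ioi 0))

open Set Metric Topology

theorem lowerSemicontinuous_measure_ball {X : Type*} [PseudoMetricSpace X] [MeasurableSpace X]
    (μ : Measure X) (r : ℝ) : LowerSemicontinuous fun x => μ (ball x r) := by
  intro x c (hc : c < μ (ball x r))
  have hmono : Monotone fun n : ℕ => ball x (r - 1 / (n + 1)) := fun m n hmn =>
    ball_subset_ball (by gcongr)
  have hunion : ⋃ n : ℕ, ball x (r - 1 / (n + 1)) = ball x r := by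
    ext y
    simp only [mem_iUnion, mem_ball]
    refine ⟨fun ⟨n, hn⟩ => hn.trans_le (sub_le_self _ (by positivity)), fun hy => ?_⟩
    obtain ⟨n, hn⟩ := exists_nat_one_div_lt (sub_pos.2 hy)
    exact ⟨n, by linarith⟩
  rw [← hunion, hmono.measure_iUnion, lt_iSup_iff] at hc
  obtain ⟨n, hn⟩ := hc
  filter_upwards [ball_mem_nhds x (by positivity : (0 : ℝ) < 1 / (n + 1))] with y hy
  refine hn.trans_le (measure_mono (ball_subset_ball' ?_))
  rw [mem_ball] at hy
  linarith [dist_comm x y]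

theorem measurable_limsup_nhdsGT {X β : Type*} [TopologicalSpace X] [MeasurableSpace X]
    [OpensMeasurableSpace X] [CompleteLinearOrder β] [TopologicalSpace β] [OrderTopology β]
    [SecondCountableTopology β] [MeasurableSpace β] [BorelSpace β]
    {f : ℝ → X → β} (a : ℝ) (hf : ∀ ε > a, LowerSemicontinuous (f ε)) :
    Measurable fun x => limsup (fun ε => f ε x) (𝓝[>] a) := by
  have hbasis : (𝓝[>] a).HasBasis (fun _ : ℕ => True) fun n => Ioo a (a + 1 / (n + 1)) :=
    (nhdsGT_basis a).to_hasBasis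
      (fun δ hδ => let ⟨n, hn⟩ := exists_nat_one_div_lt (sub_pos.2 hδ)
        ⟨n, trivial, Ioo_subset_Ioo_right (by linarith)⟩)
      (fun n _ => ⟨a + 1 / (n + 1), lt_add_of_pos_right a (by positivity), subset_rfl⟩)
  simp_rw [hbasis.limsup_eq_iInf_iSup, iInf_true]
  exact Measurable.iInf fun n => (lowerSemicontinuous_biSup fun ε hε => hf ε hε.1).measurable

theorem measurable_upperDeriv (μ : Measure ℝ) (α : ℝ) : Measurable (upperDeriv μ α) := by
  have hball : upperDeriv μ α = fun E =>
      limsup (fun ε : ℝ => μ (ball E ε) / ENNReal.ofReal ((2 * ε) ^ α)) (𝓝[>] 0) := by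
    simp only [Real.ball_eq_Ioo]
    rfl
  rw [hball]
  refine measurable_limsup_nhdsGT 0 fun ε hε => ?_
  refine (ENNReal.continuous_div_const _ ?_).comp_lowerSemicontinuous
    (lowerSemicontinuous_measure_ball μ ε) fun _ _ h => ENNReal.div_le_div_right h _
  simp only [ne_eq, ENNReal.ofReal_eq_zero, not_le]
  exact Real.rpow_pos_of_pos (by linarith) α

theorem upperDeriv_mono {μ ν : Measure ℝ} (h : ν ≤ μ) (α E : ℝ) :
    upperDeriv ν α E ≤ upperDeriv μ α E :=
  limsup_le_limsup (.of_forall fun _ => ENNReal.div_le_div_right (h _) _)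

theorem MeasureTheory.Measure.eq_restrict_of_add_eq {X : Type*} [MeasurableSpace X]
    {μ ν₁ ν₂ : Measure X} {s : Set X} (h : μ = ν₁ + ν₂) (h₁ : ν₁ sᶜ = 0) (h₂ : ν₂ s = 0) :
    ν₁ = μ.restrict s := by
  rw [h, Measure.restrict_add, Measure.restrict_eq_zero.2 h₂, add_zero,
    Measure.restrict_eq_self_of_ae_mem (mem_ae_iff.2 h₁)]

theorem stmt11_general (μ : Measure ℝ) (α : ℝ) :
    μ = μ.restrict {E | upperDeriv μ α E = ⊤} + μ.restrict {E | upperDeriv μ α E = ⊤}ᶜ ∧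
    (∀ ν₁ ν₂ : Measure ℝ, μ = ν₁ + ν₂ →
      ν₁ {E | upperDeriv μ α E = ⊤}ᶜ = 0 → ν₂ {E | upperDeriv μ α E = ⊤} = 0 →
      ν₁ = μ.restrict {E | upperDeriv μ α E = ⊤} ∧
        ν₂ = μ.restrict {E | upperDeriv μ α E = ⊤}ᶜ) ∧
    (∀ᵐ E ∂(μ.restrict {E | upperDeriv μ α E = ⊤}ᶜ),
      upperDeriv (μ.restrict {E | upperDeriv μ α E = ⊤}ᶜ) α E < ⊤) := by
  set T := {E | upperDeriv μ α E = ⊤}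
  have hT : MeasurableSet T := measurable_upperDeriv μ α (measurableSet_singleton ⊤)
  refine ⟨(Measure.restrict_add_restrict_compl hT).symm,
    fun ν₁ ν₂ h h₁ h₂ => ⟨Measure.eq_restrict_of_add_eq h h₁ h₂,
      Measure.eq_restrict_of_add_eq (h.trans (add_comm _ _)) (by rwa [compl_compl]) h₁⟩, ?_⟩
  filter_upwards [ae_restrict_mem hT.compl] with E hE
  exact (upperDeriv_mono Measure.restrict_le_self α E).trans_lt (lt_top_iff_ne_top.2 hE)

theorem stmt11 (μ : Measure ℝ) [IsFiniteMeasure μ] (α : ℝ) (hα : α ∈ Set.Icc (0 : ℝ) 1) :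
    μ = μ.restrict {E | upperDeriv μ α E = ⊤} + μ.restrict {E | upperDeriv μ α E = ⊤}ᶜ ∧
    (∀ ν₁ ν₂ : Measure ℝ, μ = ν₁ + ν₂ →
      ν₁ {E | upperDeriv μ α E = ⊤}ᶜ = 0 → ν₂ {E | upperDeriv μ α E = ⊤} = 0 →
      ν₁ = μ.restrict {E | upperDeriv μ α E = ⊤} ∧
        ν₂ = μ.restrict {E | upperDeriv μ α E = ⊤}ᶜ) ∧
    (∀ᵐ E ∂(μ.restrict {E | upperDeriv μ α E = ⊤}ᶜ),
      upperDeriv (μ.restrict {E | upperDeriv μ α E = ⊤}ᶜ) α E < ⊤) :=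
  stmt11_general μ α
end
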